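/- For every real λ and all integers 1 ≤ j ≤ n, the density of the j-th order statistic from a sample of size n from SN(λ), namely the BSN(λ, j, n−j+1) density, is log-concave: the function x ↦ log g(x; λ, j, n−j+1) is concave on ℝ. -/

import Mathlib

/-!
Up to an additive constant, `log g` is `(a - 1) log F + (b - 1) log (1 - F) + log φ + log Φ(λ·)`,
where `F` is the `SN(λ)` cdf and the weights `a - 1 = j - 1`, `b - 1 = n - j` are nonnegative, so
it suffices that each term is concave. The key fact is that the cdf `F` of a positive log-concave
density `f` is log-concave: for `x ≤ y` and `d = y - x`, log-concavity makes `f (t + d) / f t`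
nonincreasing, so `F y = ∫_{t ≤ x} f (t + d) ≥ (f y / f x) F x`, i.e. `(log F)' = f / F` is
antitone. Reflecting `f` gives the same for the survival function. Applied to `φ` this makes `Φ`
log-concave, hence also the skew-normal density `2 φ Φ(λ·)`, and applied once more to that density
it gives the concavity of `log F` and `log (1 - F)`.
-/

open MeasureTheory

/-- Standard normal density. -/
noncomputable def normPdf (x : ℝ) : ℝ := Real.exp (-x ^ 2 / 2) / Real.sqrt (2 * Real.pi)

/-- Standard normal cdf. -/
noncomputable def normCdf (x : ℝ) : ℝ := ∫ t in Set.Iic x, normPdf t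

/-- Skew-normal cdf with parameter `l`. -/
noncomputable def snCdf (l z : ℝ) : ℝ := ∫ t in Set.Iic z, 2 * normPdf t * normCdf (l * t)

/-- The Beta function. -/
noncomputable def betaFn (a b : ℝ) : ℝ := Real.Gamma a * Real.Gamma b / Real.Gamma (a + b)

/-- The Beta skew-normal density with parameters `l`, `a`, `b`. -/
noncomputable def bsnPdf (l a b x : ℝ) : ℝ :=
  (2 / betaFn a b) * snCdf l x ^ (a - 1) * (1 - snCdf l x) ^ (b - 1) * normPdf x *
    normCdf (l * x)

open Real Set

lemma ConcaveOn.comp_mul_left {g : ℝ → ℝ} (hg : ConcaveOn ℝ univ g) (c : ℝ) :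
    ConcaveOn ℝ univ fun x => g (c * x) :=
  hg.comp_linearMap (LinearMap.mul ℝ ℝ c)

lemma ConcaveOn.antitone_sub_comp_add {g : ℝ → ℝ} (hg : ConcaveOn ℝ univ g) {d : ℝ}
    (hd : 0 ≤ d) : Antitone fun t => g (t + d) - g t := by
  intro s t hst
  show g (t + d) - g t ≤ g (s + d) - g s
  rcases hd.eq_or_lt with rfl | hd
  · simp
  rcases hst.eq_or_lt with rfl | hst
  · rfl
  -- `t` and `s + d` are convex combinations of `s` and `t + d` with swapped weights
  set θ := d / (t + d - s)
  have hL : 0 < t + d - s := by linarith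
  have hθ : 0 ≤ θ := by positivity
  have hθ' : 0 ≤ 1 - θ := by rw [sub_nonneg, div_le_one hL]; linarith
  have ht := hg.2 (mem_univ s) (mem_univ (t + d)) hθ hθ' (by ring)
  have hsd := hg.2 (mem_univ s) (mem_univ (t + d)) hθ' hθ (by ring)
  have et : θ • s + (1 - θ) • (t + d) = t := by simp only [smul_eq_mul, θ]; field_simp; ring
  have esd : (1 - θ) • s + θ • (t + d) = s + d := by simp only [smul_eq_mul, θ]; field_simp; ring
  rw [et] at ht
  rw [esd] at hsd
  simp only [smul_eq_mul] at ht hsd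
  linarith

section LogConcave

variable {f : ℝ → ℝ}

lemma mul_le_mul_of_concaveOn_log (hpos : ∀ x, 0 < f x)
    (hf : ConcaveOn ℝ univ fun x => log (f x)) {s t d : ℝ} (hst : s ≤ t) (hd : 0 ≤ d) :
    f (t + d) * f s ≤ f (s + d) * f t := by
  have h : log (f (t + d)) - log (f t) ≤ log (f (s + d)) - log (f s) :=
    hf.antitone_sub_comp_add hd hst
  rw [← log_le_log_iff (by have := hpos (t + d); have := hpos s; positivity)
    (by have := hpos (s + d); have := hpos t; positivity),
    log_mul (hpos _).ne' (hpos _).ne', log_mul (hpos _).ne' (hpos _).ne']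
  linarith

lemma setIntegral_pos_of_pos (hpos : ∀ x, 0 < f x) (hint : Integrable f) {s : Set ℝ}
    (hs : volume s ≠ 0) : 0 < ∫ t in s, f t := by
  rw [setIntegral_pos_iff_support_of_nonneg_ae
    (Filter.Eventually.of_forall fun t => (hpos t).le) hint.integrableOn]
  rwa [Function.support_eq_preimage, show f ⁻¹' {0}ᶜ = univ from
    eq_univ_of_forall fun t => (hpos t).ne', univ_inter, pos_iff_ne_zero]

lemma hasDerivAt_setIntegral_Iic (hcont : Continuous f) (hint : Integrable f) (x : ℝ) :
    HasDerivAt (fun y => ∫ t in Iic y, f t) (f x) x := by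
  have h : (fun y => ∫ t in Iic y, f t) = fun y => (∫ t in Iic 0, f t) + ∫ t in (0:ℝ)..y, f t :=
    funext fun y => by
      rw [← intervalIntegral.integral_Iic_sub_Iic hint.integrableOn hint.integrableOn]; ring
  rw [h]
  exact (intervalIntegral.integral_hasDerivAt_right hint.intervalIntegrable
    hcont.stronglyMeasurable.stronglyMeasurableAtFilter hcont.continuousAt).const_add _

lemma mul_setIntegral_Iic_le (hpos : ∀ x, 0 < f x) (hint : Integrable f)
    (hf : ConcaveOn ℝ univ fun x => log (f x)) {x y : ℝ} (hxy : x ≤ y) :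
    f y * ∫ t in Iic x, f t ≤ f x * ∫ t in Iic y, f t := by
  have hshift : ∫ t in Iic y, f t = ∫ t in Iic x, f (t + (y - x)) := by
    have := (measurePreserving_add_right volume (y - x)).setIntegral_preimage_emb
      (measurableEmbedding_addRight (y - x)) f (Iic y)
    rwa [preimage_add_const_Iic, sub_sub_cancel, eq_comm] at this
  calc f y * ∫ t in Iic x, f t = ∫ t in Iic x, f y * f t := (integral_const_mul _ _).symm
    _ ≤ ∫ t in Iic x, f x * f (t + (y - x)) := by
      refine setIntegral_mono_on ((hint.const_mul _).integrableOn)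
        (((hint.comp_add_right _).const_mul _).integrableOn) measurableSet_Iic fun t ht => ?_
      have := mul_le_mul_of_concaveOn_log hpos hf (mem_Iic.1 ht) (sub_nonneg.2 hxy)
      rw [add_sub_cancel] at this
      linarith
    _ = f x * ∫ t in Iic y, f t := by rw [integral_const_mul, hshift]

theorem concaveOn_log_setIntegral_Iic (hcont : Continuous f) (hint : Integrable f)
    (hpos : ∀ x, 0 < f x) (hf : ConcaveOn ℝ univ fun x => log (f x)) :
    ConcaveOn ℝ univ fun x => log (∫ t in Iic x, f t) := by
  have hF : ∀ x, 0 < ∫ t in Iic x, f t := fun x => setIntegral_pos_of_pos hpos hint (by simp)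
  have hderiv : ∀ x, HasDerivAt (fun x => log (∫ t in Iic x, f t))
      (f x / ∫ t in Iic x, f t) x :=
    fun x => (hasDerivAt_setIntegral_Iic hcont hint x).log (hF x).ne'
  refine Antitone.concaveOn_univ_of_deriv (fun x => (hderiv x).differentiableAt) ?_
  rw [funext fun x => (hderiv x).deriv]
  intro x y hxy
  rw [div_le_div_iff₀ (hF y) (hF x)]
  exact mul_setIntegral_Iic_le hpos hint hf hxy

theorem concaveOn_log_setIntegral_Ioi (hcont : Continuous f) (hint : Integrable f)
    (hpos : ∀ x, 0 < f x) (hf : ConcaveOn ℝ univ fun x => log (f x)) :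
    ConcaveOn ℝ univ fun x => log (∫ t in Ioi x, f t) := by
  have hreflect := concaveOn_log_setIntegral_Iic (hcont.comp continuous_neg) hint.comp_neg
    (fun x => hpos (-x)) (by simpa using hf.comp_mul_left (-1))
  -- `∫ t in Iic (-x), f (-t) = ∫ t in Ioi x, f t`
  simpa using hreflect.comp_mul_left (-1)

end LogConcave

lemma normPdf_pos (x : ℝ) : 0 < normPdf x := by
  unfold normPdf; positivity

lemma normPdf_neg (x : ℝ) : normPdf (-x) = normPdf x := by
  simp [normPdf]

@[fun_prop]
lemma continuous_normPdf : Continuous normPdf := by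
  unfold normPdf; fun_prop

lemma normPdf_eq_exp_neg_mul_sq (x : ℝ) :
    normPdf x = exp (-(1 / 2) * x ^ 2) / sqrt (2 * π) := by
  unfold normPdf; ring_nf

lemma integrable_normPdf : Integrable normPdf := by
  simpa only [← normPdf_eq_exp_neg_mul_sq] using
    (integrable_exp_neg_mul_sq (by norm_num : (0:ℝ) < 1 / 2)).div_const (sqrt (2 * π))

lemma integral_normPdf : ∫ x, normPdf x = 1 := by
  simp_rw [normPdf_eq_exp_neg_mul_sq, integral_div, integral_gaussian]
  rw [show π / (1 / 2) = 2 * π by ring]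
  exact div_self (sqrt_pos.2 (by positivity)).ne'

lemma concaveOn_log_normPdf : ConcaveOn ℝ univ fun x => log (normPdf x) := by
  have h : (fun x => log (normPdf x)) = fun x => -((1 / 2) * x ^ 2) + -log (sqrt (2 * π)) := by
    funext x
    rw [normPdf_eq_exp_neg_mul_sq, log_div (exp_ne_zero _) (sqrt_pos.2 (by positivity)).ne',
      log_exp]
    ring
  rw [h]
  exact (even_two.convexOn_pow.smul (by norm_num : (0:ℝ) ≤ 1 / 2)).neg.add_const _

lemma normCdf_pos (x : ℝ) : 0 < normCdf x :=
  setIntegral_pos_of_pos normPdf_pos integrable_normPdf (by simp)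

@[fun_prop]
lemma continuous_normCdf : Continuous normCdf :=
  continuous_iff_continuousAt.2 fun x =>
    (hasDerivAt_setIntegral_Iic continuous_normPdf integrable_normPdf x).continuousAt

lemma normCdf_add_normCdf_neg (x : ℝ) : normCdf x + normCdf (-x) = 1 := by
  have h : normCdf (-x) = ∫ t in Ioi x, normPdf t := by
    rw [normCdf, ← integral_comp_neg_Ioi]; simp_rw [normPdf_neg]
  rw [h, normCdf, intervalIntegral.integral_Iic_add_Ioi integrable_normPdf.integrableOn
    integrable_normPdf.integrableOn, integral_normPdf]

lemma normCdf_le_one (x : ℝ) : normCdf x ≤ 1 := by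
  linarith [normCdf_add_normCdf_neg x, normCdf_pos (-x)]

lemma concaveOn_log_normCdf : ConcaveOn ℝ univ fun x => log (normCdf x) :=
  concaveOn_log_setIntegral_Iic continuous_normPdf integrable_normPdf normPdf_pos
    concaveOn_log_normPdf

/-- The density of `snCdf l`. -/
noncomputable def snPdf (l x : ℝ) : ℝ := 2 * normPdf x * normCdf (l * x)

lemma snPdf_pos (l x : ℝ) : 0 < snPdf l x := by
  have := normPdf_pos x; have := normCdf_pos (l * x); unfold snPdf; positivity

lemma continuous_snPdf (l : ℝ) : Continuous (snPdf l) := by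
  unfold snPdf; fun_prop

lemma integrable_snPdf (l : ℝ) : Integrable (snPdf l) := by
  refine (integrable_normPdf.const_mul 2).mono' (continuous_snPdf l).aestronglyMeasurable
    (Filter.Eventually.of_forall fun x => ?_)
  rw [norm_of_nonneg (snPdf_pos l x).le, snPdf]
  nlinarith [normPdf_pos x, normCdf_le_one (l * x)]

lemma snPdf_add_snPdf_neg (l x : ℝ) : snPdf l x + snPdf l (-x) = 2 * normPdf x := by
  have := normCdf_add_normCdf_neg (l * x)
  rw [snPdf, snPdf, normPdf_neg, mul_neg]
  linear_combination 2 * normPdf x * this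

lemma integral_snPdf (l : ℝ) : ∫ x, snPdf l x = 1 := by
  have h := integral_add (integrable_snPdf l) (integrable_snPdf l).comp_neg
  simp_rw [snPdf_add_snPdf_neg, integral_const_mul, integral_normPdf,
    integral_neg_eq_self] at h
  linarith

lemma concaveOn_log_snPdf (l : ℝ) : ConcaveOn ℝ univ fun x => log (snPdf l x) := by
  have h : (fun x => log (snPdf l x))
      = fun x => log 2 + log (normPdf x) + log (normCdf (l * x)) := by
    funext x
    rw [snPdf, log_mul (by have := normPdf_pos x; positivity) (normCdf_pos _).ne',
      log_mul two_ne_zero (normPdf_pos x).ne']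
  rw [h]
  exact ((concaveOn_const _ convex_univ).add concaveOn_log_normPdf).add
    (concaveOn_log_normCdf.comp_mul_left l)

lemma snCdf_eq (l x : ℝ) : snCdf l x = ∫ t in Iic x, snPdf l t := rfl

lemma one_sub_snCdf (l x : ℝ) : 1 - snCdf l x = ∫ t in Ioi x, snPdf l t := by
  rw [← integral_snPdf l, ← intervalIntegral.integral_Iic_add_Ioi
    (integrable_snPdf l).integrableOn (integrable_snPdf l).integrableOn, snCdf_eq,
    add_sub_cancel_left]

lemma snCdf_pos (l x : ℝ) : 0 < snCdf l x :=
  setIntegral_pos_of_pos (snPdf_pos l) (integrable_snPdf l) (by simp)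

lemma one_sub_snCdf_pos (l x : ℝ) : 0 < 1 - snCdf l x := by
  rw [one_sub_snCdf]
  exact setIntegral_pos_of_pos (snPdf_pos l) (integrable_snPdf l) (by simp)

lemma concaveOn_log_snCdf (l : ℝ) : ConcaveOn ℝ univ fun x => log (snCdf l x) :=
  concaveOn_log_setIntegral_Iic (continuous_snPdf l) (integrable_snPdf l) (snPdf_pos l)
    (concaveOn_log_snPdf l)

lemma concaveOn_log_one_sub_snCdf (l : ℝ) : ConcaveOn ℝ univ fun x => log (1 - snCdf l x) := by
  simp_rw [one_sub_snCdf]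
  exact concaveOn_log_setIntegral_Ioi (continuous_snPdf l) (integrable_snPdf l) (snPdf_pos l)
    (concaveOn_log_snPdf l)

lemma betaFn_pos {a b : ℝ} (ha : 0 < a) (hb : 0 < b) : 0 < betaFn a b :=
  div_pos (mul_pos (Gamma_pos_of_pos ha) (Gamma_pos_of_pos hb)) (Gamma_pos_of_pos (add_pos ha hb))

lemma log_bsnPdf {a b : ℝ} (ha : 0 < a) (hb : 0 < b) (l x : ℝ) :
    log (bsnPdf l a b x) = log (2 / betaFn a b) + (a - 1) * log (snCdf l x)
      + (b - 1) * log (1 - snCdf l x) + log (normPdf x) + log (normCdf (l * x)) := by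
  have hB := betaFn_pos ha hb
  have hF := snCdf_pos l x
  have hG := one_sub_snCdf_pos l x
  have hφ := normPdf_pos x
  have hΦ := normCdf_pos (l * x)
  rw [bsnPdf, log_mul (by positivity) hΦ.ne', log_mul (by positivity) hφ.ne',
    log_mul (by positivity) (by positivity), log_mul (by positivity) (by positivity),
    log_rpow hF, log_rpow hG]

/-- The density of the j-th order statistic from a sample of size `n` from `SN(l)`,
namely the `BSN(l, j, n-j+1)` density, is log-concave. -/
theorem bsn_order_statistic_log_concave (l : ℝ) (j n : ℕ) (hj1 : 1 ≤ j) (hjn : j ≤ n) :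
    ConcaveOn ℝ Set.univ fun x : ℝ =>
      Real.log (bsnPdf l j ((n : ℝ) - j + 1) x) := by
  have hj : (1 : ℝ) ≤ j := by exact_mod_cast hj1
  have hjn' : (j : ℝ) ≤ n := by exact_mod_cast hjn
  simp_rw [log_bsnPdf (by linarith : (0 : ℝ) < j) (by linarith : (0 : ℝ) < n - j + 1)]
  exact ((((concaveOn_const _ convex_univ).add
    ((concaveOn_log_snCdf l).smul (by linarith : (0 : ℝ) ≤ j - 1))).add
    ((concaveOn_log_one_sub_snCdf l).smul (by linarith : (0 : ℝ) ≤ n - j + 1 - 1))).add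
    concaveOn_log_normPdf).add (concaveOn_log_normCdf.comp_mul_left l)
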